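/- The function μ ↦ μ·κ̂(μ) is continuous and strictly concave on [1,∞), and is real-analytic on (1,∞). -/

import Mathlib

/-- The variational functional `f_μ(δ,ε)` (convention `0 log 0 = 0`, automatic
since `Real.log 0 = 0`). -/
noncomputable def fmu (μ : ℝ) (p : ℝ × ℝ) : ℝ :=
  -2 * p.1 * Real.log p.1 - 2 * p.2 * Real.log p.2
    - (1 - p.1 - p.2) * Real.log (1 - p.1 - p.2)
    - ((μ - 1) / 2 - p.1) * Real.log ((μ - 1) / 2 - p.1)
    - ((μ - 1) / 2 - p.2) * Real.log ((μ - 1) / 2 - p.2)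
    + (μ - 1) * Real.log ((μ - 1) / 2)

/-- The domain `D_μ` of `f_μ`. -/
def Dmu (μ : ℝ) : Set (ℝ × ℝ) :=
  {p | 0 ≤ p.1 ∧ 0 ≤ p.2 ∧ p.1 + p.2 ≤ 1 ∧ p.1 ≤ (μ - 1) / 2 ∧ p.2 ≤ (μ - 1) / 2}

/-- The interface entropy per step `κ̂(μ) = (1/μ) · sup_{(δ,ε) ∈ D_μ} f_μ(δ,ε)`. -/
noncomputable def kappaHat (μ : ℝ) : ℝ := (1 / μ) * sSup (fmu μ '' Dmu μ)

/-! With `t = μ - 1`, the supremum of `f_μ` is `arsinh t + t · arsinh t⁻¹`. Each of the five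
terms `-x log x` of `f_μ` lies below its tangent line `q - x - x log q`, with equality at `x = q`;
taking for `q` the values of the five arguments at the stationary point
`δ = ε = (t + 1 - √(1 + t²)) / 2`, the weighted sum of the tangent lines no longer depends on
`(δ, ε)`, so it is the maximum. This closed form is continuous at `t = 0`, analytic for `t ≠ 0`,
and its derivative `arsinh t⁻¹` is strictly decreasing on `t > 0`, whence strict concavity. -/

open Real Set

namespace Real

lemma neg_mul_log_le_sub_sub_mul_log {x q : ℝ} (hx : 0 ≤ x) (hq : 0 < q) :
    -(x * log x) ≤ q - x - x * log q := by
  rcases hx.eq_or_lt with rfl | hx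
  · simpa using hq.le
  · have h := mul_le_mul_of_nonneg_left (log_le_sub_one_of_pos (div_pos hq hx)) hx.le
    rw [log_div hq.ne' hx.ne', mul_sub, mul_sub, mul_div_cancel₀ _ hx.ne'] at h
    linarith

lemma sqrt_one_add_inv_sq {t : ℝ} (ht : 0 < t) : √(1 + t⁻¹ ^ 2) = √(1 + t ^ 2) / t := by
  have h : 1 + t ^ 2 = (1 + t⁻¹ ^ 2) * t ^ 2 := by field_simp; ring
  rw [h, sqrt_mul (by positivity), sqrt_sq ht.le, mul_div_cancel_right₀ _ ht.ne']

lemma arsinh_inv_eq_log_sub_log {t : ℝ} (ht : 0 < t) :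
    arsinh t⁻¹ = log (1 + √(1 + t ^ 2)) - log t := by
  rw [arsinh, sqrt_one_add_inv_sq ht, ← log_div (by positivity) ht.ne']
  congr 1
  field_simp

lemma arsinh_inv_eq_log_sub_log_sqrt_sub_one {t : ℝ} (ht : 0 < t) :
    arsinh t⁻¹ = log t - log (√(1 + t ^ 2) - 1) := by
  have hr2 : √(1 + t ^ 2) ^ 2 = 1 + t ^ 2 := sq_sqrt (by positivity)
  have hr1 : 1 < √(1 + t ^ 2) := by nlinarith [sqrt_nonneg (1 + t ^ 2)]
  have h_sq : (√(1 + t ^ 2) - 1) * (1 + √(1 + t ^ 2)) = t ^ 2 := by linear_combination hr2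
  have h_log := congrArg log h_sq
  rw [log_mul (by linarith) (by linarith), log_pow, Nat.cast_ofNat] at h_log
  rw [arsinh_inv_eq_log_sub_log ht]
  linarith

lemma log_sqrt_one_add_sq_sub (t : ℝ) : log (√(1 + t ^ 2) - t) = -arsinh t := by
  have hr2 : √(1 + t ^ 2) ^ 2 = 1 + t ^ 2 := sq_sqrt (by positivity)
  have hpos : 0 < t + √(1 + t ^ 2) := by nlinarith [sqrt_nonneg (1 + t ^ 2)]
  rw [arsinh, eq_neg_iff_add_eq_zero, ← log_mul _ hpos.ne', ← log_one]
  · congr 1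
    linear_combination hr2
  · nlinarith

lemma mul_arsinh_inv {t : ℝ} (ht : 0 ≤ t) :
    t * arsinh t⁻¹ = t * log (1 + √(1 + t ^ 2)) - t * log t := by
  rcases ht.eq_or_lt with rfl | ht
  · simp
  · rw [arsinh_inv_eq_log_sub_log ht, mul_sub]

end Real

noncomputable def interfaceEntropy (t : ℝ) : ℝ := arsinh t + t * arsinh t⁻¹

lemma hasDerivAt_interfaceEntropy {t : ℝ} (ht : 0 < t) :
    HasDerivAt interfaceEntropy (arsinh t⁻¹) t := by
  have h := (hasDerivAt_arsinh t).add ((hasDerivAt_id' t).mul (hasDerivAt_inv ht.ne').arsinh)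
  refine h.congr_deriv ?_
  rw [sqrt_one_add_inv_sq ht, smul_eq_mul]
  field_simp
  ring

lemma continuousOn_interfaceEntropy : ContinuousOn interfaceEntropy (Ici 0) := by
  have h : Continuous fun t : ℝ ↦ t * log (1 + √(1 + t ^ 2)) - t * log t :=
    (continuous_id.mul ((by fun_prop : Continuous fun t : ℝ ↦ 1 + √(1 + t ^ 2)).log
      fun t ↦ by positivity)).sub continuous_mul_log
  exact continuous_arsinh.continuousOn.add (h.continuousOn.congr fun t ht ↦ mul_arsinh_inv ht)

lemma analyticAt_interfaceEntropy {t : ℝ} (ht : t ≠ 0) : AnalyticAt ℝ interfaceEntropy t :=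
  analyticAt_arsinh.add (analyticAt_id.mul (analyticAt_arsinh.comp (analyticAt_inv ht)))

lemma strictConcaveOn_interfaceEntropy : StrictConcaveOn ℝ (Ici 0) interfaceEntropy := by
  refine StrictAntiOn.strictConcaveOn_of_deriv (convex_Ici 0) continuousOn_interfaceEntropy ?_
  rw [interior_Ici]
  intro x hx y hy hxy
  rw [(hasDerivAt_interfaceEntropy hx).deriv, (hasDerivAt_interfaceEntropy hy).deriv]
  exact arsinh_strictMono (inv_strictAntiOn hx hy hxy)

lemma isGreatest_fmu_image {μ : ℝ} (hμ : 1 < μ) :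
    IsGreatest (fmu μ '' Dmu μ) (interfaceEntropy (μ - 1)) := by
  set t := μ - 1 with ht_def
  have ht : 0 < t := by linarith
  set r := √(1 + t ^ 2) with hr_def
  have hr2 : r ^ 2 = 1 + t ^ 2 := sq_sqrt (by positivity)
  have hr0 : 0 ≤ r := sqrt_nonneg _
  have htr : t < r := by nlinarith
  have h1r : 1 < r := by nlinarith
  set d := (t + 1 - r) / 2 with hd_def
  have hd : 0 < d := by nlinarith
  have hc : 0 < r - t := by linarith
  have ha : 0 < (r - 1) / 2 := by linarith
  have hlog_c : log (r - t) = -arsinh t := log_sqrt_one_add_sq_sub t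
  clear_value t r
  have hlog_a : log (t / 2) - log ((r - 1) / 2) = arsinh t⁻¹ := by
    rw [arsinh_inv_eq_log_sub_log_sqrt_sub_one ht, ← hr_def, log_div ht.ne' two_ne_zero,
      log_div (by linarith) two_ne_zero]
    ring
  have hlog_d : 2 * log d = log (r - t) + log ((r - 1) / 2) := by
    have hd_sq : d ^ 2 = (r - t) * ((r - 1) / 2) := by linear_combination -hr2 / 4
    rw [← log_mul hc.ne' ha.ne', ← hd_sq, log_pow, Nat.cast_ofNat]
  have hsum : ∀ δ ε : ℝ,
      2 * (d - δ - δ * log d) + 2 * (d - ε - ε * log d)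
        + (r - t - (1 - δ - ε) - (1 - δ - ε) * log (r - t))
        + ((r - 1) / 2 - (t / 2 - δ) - (t / 2 - δ) * log ((r - 1) / 2))
        + ((r - 1) / 2 - (t / 2 - ε) - (t / 2 - ε) * log ((r - 1) / 2))
        + t * log (t / 2) = interfaceEntropy t := fun δ ε ↦ by
    unfold interfaceEntropy
    linear_combination (-(δ + ε)) * hlog_d - hlog_c + t * hlog_a
  refine ⟨⟨(d, d), ⟨hd.le, hd.le, by linarith, by linarith, by linarith⟩, ?_⟩, ?_⟩
  · have hc_eq : 1 - d - d = r - t := by linarith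
    have ha_eq : t / 2 - d = (r - 1) / 2 := by linarith
    simp only [fmu, ← ht_def, hc_eq, ha_eq, ← hsum d d]
    ring
  · rintro _ ⟨⟨δ, ε⟩, ⟨hδ, hε, hδε, hδt, hεt⟩, rfl⟩
    have := neg_mul_log_le_sub_sub_mul_log hδ hd
    have := neg_mul_log_le_sub_sub_mul_log hε hd
    have := neg_mul_log_le_sub_sub_mul_log (by linarith : 0 ≤ 1 - δ - ε) hc
    have := neg_mul_log_le_sub_sub_mul_log (by linarith : 0 ≤ t / 2 - δ) ha
    have := neg_mul_log_le_sub_sub_mul_log (by linarith : 0 ≤ t / 2 - ε) ha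
    simp only [fmu, ← ht_def, ← hsum δ ε]
    linarith

lemma Dmu_one : Dmu 1 = {(0, 0)} := by
  ext ⟨δ, ε⟩
  simp only [Dmu, mem_ofPred_eq, mem_singleton_iff, Prod.mk.injEq]
  constructor
  · rintro ⟨hδ, hε, -, hδ', hε'⟩
    norm_num at hδ' hε'
    exact ⟨by linarith, by linarith⟩
  · rintro ⟨rfl, rfl⟩
    norm_num

lemma sSup_fmu_image {μ : ℝ} (hμ : 1 ≤ μ) : sSup (fmu μ '' Dmu μ) = interfaceEntropy (μ - 1) := by
  rcases hμ.eq_or_lt with rfl | hμ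
  · simp [Dmu_one, fmu, interfaceEntropy]
  · exact (isGreatest_fmu_image hμ).csSup_eq

lemma mul_kappaHat {μ : ℝ} (hμ : 1 ≤ μ) : μ * kappaHat μ = interfaceEntropy (μ - 1) := by
  rw [kappaHat, sSup_fmu_image hμ, ← mul_assoc, mul_one_div_cancel (by positivity), one_mul]

/-- `μ ↦ μ·κ̂(μ)` is continuous and strictly concave on `[1,∞)`, and
real-analytic on `(1,∞)`. -/
theorem stmt8 :
    ContinuousOn (fun μ : ℝ => μ * kappaHat μ) (Set.Ici 1) ∧
    StrictConcaveOn ℝ (Set.Ici (1 : ℝ)) (fun μ : ℝ => μ * kappaHat μ) ∧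
    AnalyticOnNhd ℝ (fun μ : ℝ => μ * kappaHat μ) (Set.Ioi 1) := by
  have hEq : EqOn (fun μ ↦ interfaceEntropy (μ - 1)) (fun μ ↦ μ * kappaHat μ) (Ici 1) :=
    fun μ hμ ↦ (mul_kappaHat hμ).symm
  refine ⟨?_, ?_, ?_⟩
  · refine ContinuousOn.congr ?_ hEq.symm
    exact continuousOn_interfaceEntropy.comp (by fun_prop) fun _ hμ ↦ mem_Ici.2 (sub_nonneg.2 hμ)
  · refine StrictConcaveOn.congr ?_ hEq
    have hIci : (fun μ : ℝ ↦ -1 + μ) ⁻¹' Ici 0 = Ici 1 := by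
      ext μ
      simp
    have h := strictConcaveOn_interfaceEntropy.translate_left (-1)
    rw [hIci] at h
    exact h
  · refine AnalyticOnNhd.congr (f := fun μ ↦ interfaceEntropy (μ - 1)) isOpen_Ioi
      (fun μ hμ ↦ ?_) (hEq.mono Ioi_subset_Ici_self)
    exact (analyticAt_interfaceEntropy (sub_ne_zero.2 (ne_of_gt hμ))).comp (f := (· - 1))
      (by fun_prop)
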